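/- arXiv:2304.13823 — 4 statements merged into one kernel-verified Lean document; each statement's English description precedes it below -/
import Mathlib

section
/- Let k ≥ 2 be an integer and let b_1, …, b_k be elements of a commutative ring. Then the determinant of the loop matrix A_loop equals b_1·b_2⋯b_k + (−1)^{k−1}. -/
/-- The loop matrix of exponents `b : Fin k → R`: entries `b i` on the diagonal,
`1` in positions `(i, i+1)` for `i = 0, …, k-2` and in position `(k-1, 0)`,
and `0` elsewhere. (This is the exponent matrix of the atomic loop potential.) -/
def loopMatrix {R : Type*} [CommRing R] {k : ℕ} (b : Fin k → R) :
    Matrix (Fin k) (Fin k) R :=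
  Matrix.of fun i j =>
    if i = j then b i
    else if j.val = i.val + 1 ∨ (i.val = k - 1 ∧ j.val = 0) then 1 else 0

/-!
Expand the determinant along the first column. Its only nonzero entries are `b 1` (row `1`)
and the `1` in row `k` closing the loop. Deleting row `1` leaves an upper triangular minor with
diagonal `b 2, …, b k`; deleting row `k` leaves a lower triangular minor with ones on the
diagonal, and its cofactor sign is `(-1)^(k-1)`.
-/

namespace Matrix

variable {R : Type*} [CommRing R]

theorem det_of_column_zero_eq_zero_of_ne_zero_of_ne_last {n : ℕ}
    (A : Matrix (Fin (n + 2)) (Fin (n + 2)) R)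
    (hA : ∀ i, i ≠ 0 → i ≠ Fin.last (n + 1) → A i 0 = 0) :
    A.det = A 0 0 * (A.submatrix Fin.succ Fin.succ).det +
      (-1) ^ (n + 1) * A (Fin.last (n + 1)) 0 * (A.submatrix Fin.castSucc Fin.succ).det := by
  rw [det_succ_column_zero, ← Finset.sum_subset (Finset.subset_univ {0, Fin.last (n + 1)}),
    Finset.sum_pair (Fin.last_pos.ne : (0 : Fin (n + 2)) ≠ Fin.last (n + 1))]
  · simp
  · intro i _ hi
    simp only [Finset.mem_insert, Finset.mem_singleton, not_or] at hi
    simp [hA i hi.1 hi.2]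

end Matrix

section loopMatrix

variable {R : Type*} [CommRing R]

section

variable {k : ℕ} (b : Fin k → R)

@[simp]
theorem loopMatrix_apply_self (i : Fin k) : loopMatrix b i i = b i := by
  simp [loopMatrix]

theorem loopMatrix_apply_of_val_eq_succ {i j : Fin k} (h : j.val = i.val + 1) :
    loopMatrix b i j = 1 := by
  have hij : i ≠ j := fun e => by simp [e] at h
  simp [loopMatrix, hij, h]

theorem loopMatrix_apply_eq_zero {i j : Fin k} (hij : i.val ≠ j.val) (hsucc : j.val ≠ i.val + 1)
    (hloop : ¬(i.val = k - 1 ∧ j.val = 0)) : loopMatrix b i j = 0 := by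
  simp [loopMatrix, Fin.ext_iff, hij, hsucc, hloop]

end

variable {n : ℕ} (b : Fin (n + 2) → R)

theorem loopMatrix_apply_last_zero : loopMatrix b (Fin.last (n + 1)) 0 = 1 := by
  simp [loopMatrix, Fin.last_pos.ne']

theorem loopMatrix_apply_zero_eq_zero {i : Fin (n + 2)} (h0 : i ≠ 0)
    (hlast : i ≠ Fin.last (n + 1)) : loopMatrix b i 0 = 0 := by
  rw [Ne, Fin.ext_iff, Fin.val_zero] at h0
  rw [Ne, Fin.ext_iff, Fin.val_last] at hlast
  apply loopMatrix_apply_eq_zero <;> simp only [Fin.val_zero] <;> omega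

theorem det_loopMatrix_submatrix_succ_succ :
    ((loopMatrix b).submatrix Fin.succ Fin.succ).det = ∏ i : Fin (n + 1), b i.succ := by
  rw [Matrix.det_of_isUpperTriangular]
  · simp
  · intro i j (hji : j.val < i.val)
    simp only [Matrix.submatrix_apply]
    apply loopMatrix_apply_eq_zero <;> simp only [Fin.val_succ] <;> omega

theorem det_loopMatrix_submatrix_castSucc_succ :
    ((loopMatrix b).submatrix Fin.castSucc Fin.succ).det = 1 := by
  rw [Matrix.det_of_isLowerTriangular]
  · exact Finset.prod_eq_one fun i _ => loopMatrix_apply_of_val_eq_succ b (by simp)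
  · intro i j (hij : i.val < j.val)
    simp only [Matrix.submatrix_apply]
    apply loopMatrix_apply_eq_zero <;> simp only [Fin.val_succ, Fin.val_castSucc] <;> omega

end loopMatrix

/-- The determinant of the loop matrix is `b 1 ⋯ b k + (-1)^(k-1)`. -/
theorem det_loopMatrix {R : Type*} [CommRing R] {k : ℕ} (hk : 2 ≤ k)
    (b : Fin k → R) :
    (loopMatrix b).det = (∏ i, b i) + (-1 : R) ^ (k - 1) := by
  obtain ⟨n, rfl⟩ : ∃ n, k = n + 2 := ⟨k - 2, by omega⟩
  rw [Matrix.det_of_column_zero_eq_zero_of_ne_zero_of_ne_last _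
      fun _ => loopMatrix_apply_zero_eq_zero b,
    det_loopMatrix_submatrix_succ_succ, det_loopMatrix_submatrix_castSucc_succ,
    loopMatrix_apply_self, loopMatrix_apply_last_zero, Fin.prod_univ_succ b]
  simp
end

section
/- Fix an integer r ≥ 1 and set n = 2r+1. With b_0,…,b_{2r+1}, v_{2r+1}, D_{2r+1}, m_{2r+1} defined as in the context, the identity m_{2r+1}·D_{2r+1} − 1 = b_0·b_1⋯b_{2r+1}·v_{2r+1} holds. -/
/-- The alternating symbol `B_{i_1,…,i_k} = b_{i_1}⋯b_{i_k} − b_{i_1}⋯b_{i_{k−1}} + ⋯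
+ (−1)^{k−1} b_{i_1} + (−1)^k`, with `B` of the empty list equal to `1`. -/
def altB (b : ℕ → ℤ) (L : List ℕ) : ℤ :=
  ∑ t ∈ Finset.range (L.length + 1), (-1) ^ (L.length - t) * ((L.take t).map b).prod

/-- The list `L_j = (r+1, r, r+2, r−1, …, r+j, r+1−j)`, the concatenation of the pairs
`(r+t, r+1−t)` for `t = 1, …, j`. -/
def loopList (r j : ℕ) : List ℕ :=
  (List.range j).flatMap fun t => [r + t + 1, r - t]

lemma altB_nil (b : ℕ → ℤ) : altB b [] = 1 := by simp [altB]

lemma altB_concat (b : ℕ → ℤ) (L : List ℕ) (a : ℕ) :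
    altB b (L ++ [a]) = ((L.map b).prod) * b a - altB b L := by
  unfold altB
  simp only [List.length_append, List.length_cons, List.length_nil, Nat.zero_add]
  rw [Finset.sum_range_succ]
  have h0 : (L ++ [a]).take (L.length + 1) = L ++ [a] := by
    apply List.take_of_length_le; simp
  rw [h0]
  have h1 : ∀ t ∈ Finset.range (L.length + 1),
      (-1:ℤ) ^ (L.length + 1 - t) * (((L ++ [a]).take t).map b).prod
      = -((-1) ^ (L.length - t) * ((L.take t).map b).prod) := by
    intro t ht
    rw [Finset.mem_range] at ht
    rw [List.take_append_of_le_length (by omega)]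
    rw [show L.length + 1 - t = (L.length - t) + 1 from by omega, pow_succ]
    ring
  rw [Finset.sum_congr rfl h1, Finset.sum_neg_distrib]
  simp [List.map_append]
  ring

lemma altB_cons (b : ℕ → ℤ) (a : ℕ) (L : List ℕ) :
    altB b (a :: L) = b a * altB b L + (-1) ^ (L.length + 1) := by
  unfold altB
  simp only [List.length_cons]
  rw [Finset.sum_range_succ']
  simp only [List.take_succ_cons, List.map_cons, List.prod_cons, List.take_zero,
    List.map_nil, List.prod_nil, mul_one, Nat.sub_zero, Nat.succ_sub_succ]
  rw [Finset.mul_sum]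
  congr 1
  apply Finset.sum_congr rfl
  intro i _
  ring

lemma altB_reverse (b : ℕ → ℤ) (L : List ℕ) :
    altB b L.reverse
      = ∑ t ∈ Finset.range (L.length + 1), (-1) ^ t * ((L.drop t).map b).prod := by
  unfold altB
  rw [List.length_reverse]
  rw [← Finset.sum_range_reflect (fun t => (-1:ℤ)^t * ((L.drop t).map b).prod) (L.length+1)]
  apply Finset.sum_congr rfl
  intro t ht
  rw [Finset.mem_range] at ht
  rw [show L.length + 1 - 1 - t = L.length - t from by omega]
  rw [List.take_reverse, List.map_reverse, List.prod_reverse]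

lemma altB_single (b : ℕ → ℤ) (y : ℕ) : altB b [y] = b y - 1 := by
  have := altB_concat b [] y
  simpa [altB_nil] using this

lemma altB_pair (b : ℕ → ℤ) (x y : ℕ) : altB b [x, y] = b x * b y - b x + 1 := by
  have h := altB_concat b [x] y
  rw [altB_single] at h
  simp only [List.cons_append, List.nil_append, List.map_cons, List.map_nil,
    List.prod_cons, List.prod_nil, mul_one] at h
  rw [h]
  ring

lemma loopList_succ (r j : ℕ) : loopList r (j+1) = loopList r j ++ [r + j + 1, r - j] := by
  unfold loopList
  rw [List.range_succ, List.flatMap_append]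
  simp

lemma loopList_length (r j : ℕ) : (loopList r j).length = 2 * j := by
  induction j with
  | zero => simp [loopList]
  | succ n ih => rw [loopList_succ, List.length_append, ih]; simp; omega

lemma B_rec (b : ℕ → ℤ) (r j : ℕ) :
    altB b (loopList r (j+1)) =
      altB b (loopList r j)
        + ((loopList r j).map b).prod * (b (r+j+1) * (b (r-j) - 1)) := by
  rw [loopList_succ, show [r+j+1, r-j] = [r+j+1] ++ [r-j] from rfl, ← List.append_assoc,
      altB_concat, altB_concat]
  simp [List.map_append]
  ring

lemma M_rec (b : ℕ → ℤ) (r j : ℕ) :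
    altB b (loopList r (j+1)).reverse =
      b (r+j+1) * b (r-j) * altB b (loopList r j).reverse - (b (r-j) - 1) := by
  rw [loopList_succ]
  have hrev : (loopList r j ++ [r+j+1, r-j]).reverse
      = (r-j) :: (r+j+1) :: (loopList r j).reverse := by simp
  rw [hrev, altB_cons, altB_cons]
  simp only [List.length_cons, List.length_reverse, loopList_length]
  have e1 : (-1:ℤ)^(2*j) = 1 := by rw [pow_mul]; norm_num
  have e2 : (-1:ℤ)^(2*j+1) = -1 := by rw [pow_succ, e1]; norm_num
  rw [e2, show 2*j+1+1 = (2*j+1)+1 from rfl, pow_succ, e2]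
  ring

lemma P_rec (b : ℕ → ℤ) (r j : ℕ) :
    ((loopList r (j+1)).map b).prod
      = ((loopList r j).map b).prod * (b (r+j+1) * b (r-j)) := by
  rw [loopList_succ]
  simp [List.map_append]

lemma V_rec (b : ℕ → ℤ) (r j : ℕ) :
    (∑ t ∈ Finset.range (2*(j+1)), (-1:ℤ)^t * altB b ((loopList r (j+1)).drop t)) =
      (∑ t ∈ Finset.range (2*j), (-1:ℤ)^t * altB b ((loopList r j).drop t))
      + b (r+j+1) * (b (r-j) - 1) * (altB b (loopList r j).reverse) - b (r-j) + 2 := by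
  have hL : (loopList r j).length = 2*j := loopList_length r j
  rw [loopList_succ]
  rw [show 2*(j+1) = (2*j+1)+1 from by ring, Finset.sum_range_succ, Finset.sum_range_succ]
  have h1 : (loopList r j ++ [r+j+1, r-j]).drop (2*j+1) = [r-j] := by
    rw [show loopList r j ++ [r+j+1, r-j] = (loopList r j ++ [r+j+1]) ++ [r-j] from by simp]
    have hl2 : (loopList r j ++ [r+j+1]).length = 2*j+1 := by simp [hL]
    rw [show 2*j+1 = (loopList r j ++ [r+j+1]).length + 0 from by simp [hl2], List.drop_append]
    simp
  have h2 : (loopList r j ++ [r+j+1, r-j]).drop (2*j) = [r+j+1, r-j] := by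
    rw [show 2*j = (loopList r j).length + 0 from by simp [hL], List.drop_append]
    simp
  have h3 : ∀ t ∈ Finset.range (2*j),
      (-1:ℤ)^t * altB b ((loopList r j ++ [r+j+1, r-j]).drop t)
      = (-1)^t * altB b ((loopList r j).drop t)
        + (b (r+j+1) * (b (r-j) - 1)) * ((-1)^t * (((loopList r j).drop t).map b).prod) := by
    intro t ht
    rw [Finset.mem_range] at ht
    rw [List.drop_append_of_le_length (by omega)]
    rw [show (loopList r j).drop t ++ [r+j+1, r-j]
        = ((loopList r j).drop t ++ [r+j+1]) ++ [r-j] from by simp,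
      altB_concat, altB_concat]
    simp [List.map_append]
    ring
  rw [h1, h2, Finset.sum_congr rfl h3, Finset.sum_add_distrib, ← Finset.mul_sum]
  have h4 : (∑ t ∈ Finset.range (2*j), (-1:ℤ)^t * (((loopList r j).drop t).map b).prod)
      = altB b (loopList r j).reverse - 1 := by
    rw [altB_reverse, hL, Finset.sum_range_succ]
    have hd : (loopList r j).drop (2*j) = [] := by
      rw [← hL]; exact List.drop_length
    rw [hd]
    have e1 : (-1:ℤ)^(2*j) = 1 := by rw [pow_mul]; norm_num
    simp [e1]
  rw [h4, altB_pair, altB_single]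
  have e1 : (-1:ℤ)^(2*j) = 1 := by rw [pow_mul]; norm_num
  have e2 : (-1:ℤ)^(2*j+1) = -1 := by rw [pow_succ, e1]; norm_num
  rw [e1, e2]
  ring

lemma prod_loopList (b : ℕ → ℤ) (r : ℕ) : ∀ j, j ≤ r + 1 →
    ((loopList r j).map b).prod = ∏ i ∈ Finset.Ico (r + 1 - j) (r + 1 + j), b i := by
  intro j
  induction j with
  | zero => simp [loopList]
  | succ n ih =>
    intro hn
    rw [P_rec, ih (by omega)]
    rw [show r+1-(n+1) = r-n from by omega]
    rw [show r+1+(n+1) = (r+1+n)+1 from by ring, Finset.prod_Ico_succ_top (by omega)]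
    rw [Finset.prod_eq_prod_Ico_succ_bot (show r-n < r+1+n from by omega)]
    rw [show r-n+1 = r+1-n from by omega]
    ring

/-- Odd-dimensional case `n = 2r+1`: with `b`, `v_{2r+1}`, `D_{2r+1}`, `m_{2r+1}` as in
the paper's klt Calabi–Yau variety example (built from Sylvester's sequence `s`), the
identity `m_{2r+1} · D_{2r+1} − 1 = b_0 b_1 ⋯ b_{2r+1} · v_{2r+1}` holds. -/
theorem odd_example_identity (r : ℕ) (hr : 1 ≤ r)
    (s : ℕ → ℤ) (hs0 : s 0 = 2)
    (hsrec : ∀ m, s (m + 1) = (∏ i ∈ Finset.range (m + 1), s i) + 1)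
    (b : ℕ → ℤ) (hb1 : ∀ i ≤ r, b i = s i)
    (hb2 : ∀ i, 1 ≤ i → i ≤ r + 1 →
      b (r + i) = 1 + (b (r + 1 - i) - 1) ^ 2 * altB b (loopList r (i - 1)))
    (D M v : ℤ)
    (hD : D = altB b (loopList r (r + 1)))
    (hM : M = altB b (loopList r (r + 1)).reverse)
    (hv : v = ∑ t ∈ Finset.range (2 * r + 2),
      (-1) ^ t * altB b ((loopList r (r + 1)).drop t)) :
    M * D - 1 = (∏ i ∈ Finset.range (2 * r + 2), b i) * v := by
  have syl : ∀ m : ℕ, m + 1 ≤ r → b (m+1) - 1 = (b m - 1) * b m := by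
    intro m hm
    rw [hb1 (m+1) hm, hb1 m (by omega)]
    cases m with
    | zero =>
      rw [hsrec 0, Finset.prod_range_one, hs0]
      norm_num
    | succ k =>
      have h1 := hsrec (k+1)
      have h2 := hsrec k
      rw [Finset.prod_range_succ] at h1
      linear_combination h1 - s (k+1) * h2
  have key : ∀ j, j ≤ r + 1 →
      (altB b (loopList r j).reverse * altB b (loopList r j) - 1
        - ((loopList r j).map b).prod
          * (∑ t ∈ Finset.range (2*j), (-1:ℤ)^t * altB b ((loopList r j).drop t)))
        * (b (r+1-j) - 1)
      = (b (r+1-j) - 2) * (((loopList r j).map b).prod - 1) := by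
    intro j
    induction j with
    | zero =>
      intro _
      simp [loopList, altB]
    | succ n ih =>
      intro hn
      rw [B_rec, M_rec, P_rec, V_rec, show r + 1 - (n+1) = r - n from by omega]
      have hb' : b (r+n+1) = 1 + (b (r-n) - 1)^2 * altB b (loopList r n) := by
        have := hb2 (n+1) (by omega) (by omega)
        simpa [show r + (n+1) = r+n+1 from by ring, Nat.succ_sub_succ] using this
      rw [hb']
      have h1 : (altB b (loopList r n).reverse * altB b (loopList r n) - 1
          - ((loopList r n).map b).prod
            * (∑ t ∈ Finset.range (2*n), (-1:ℤ)^t * altB b ((loopList r n).drop t)))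
          * ((b (r-n) - 1)^2 + (b (r-n) - 1))
          = ((b (r-n) - 1)^2 + (b (r-n) - 1) - 1)
            * (((loopList r n).map b).prod - 1) := by
        cases n with
        | zero =>
          simp [loopList, altB]
        | succ k =>
          have ihh := ih (by omega)
          rw [show r + 1 - (k+1) = r - k from by omega] at ihh
          have hs : b (r-k) - 1 = (b (r-(k+1)) - 1) * b (r-(k+1)) := by
            have := syl (r-(k+1)) (by omega)
            rwa [show r-(k+1)+1 = r-k from by omega] at this
          linear_combination ihh
            + (((loopList r (k+1)).map b).prod - 1
              - (altB b (loopList r (k+1)).reverse * altB b (loopList r (k+1)) - 1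
                 - ((loopList r (k+1)).map b).prod
                   * (∑ t ∈ Finset.range (2*(k+1)), (-1:ℤ)^t
                        * altB b ((loopList r (k+1)).drop t)))) * hs
      linear_combination (1 + (b (r-n) - 1)^2 * altB b (loopList r n)) * h1
  have hkey := key (r+1) le_rfl
  rw [show r + 1 - (r+1) = 0 from by omega, hb1 0 (by omega), hs0] at hkey
  rw [show 2*(r+1) = 2*r+2 from by ring] at hkey
  have hP : ((loopList r (r+1)).map b).prod = ∏ i ∈ Finset.range (2*r+2), b i := by
    rw [prod_loopList b r (r+1) le_rfl, show r + 1 - (r+1) = 0 from by omega,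
      Finset.range_eq_Ico, show r+1+(r+1) = 2*r+2 from by omega]
  rw [hD, hM, hv, ← hP]
  linear_combination hkey
end

section
/- Let f = x_0^2·x_4 + x_1^3·x_3 + x_1·x_2^5 + x_0·x_3^{12} + x_2·x_4^{165} ∈ ℂ[x_0, …, x_4]. If a point x ∈ ℂ^5 satisfies ∂f/∂x_i(x) = 0 for all i = 0, …, 4, then x = 0. (Hence the hypersurface {f = 0} of degree 191 in ℙ(95, 61, 26, 8, 1) is quasismooth.) -/
/-!
`f` is a loop polynomial `∑ᵢ xᵢ^{aᵢ} x_{σ i}` for the 5-cycle `σ = (0 4 2 1 3)` and exponents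
`a = (2, 3, 5, 12, 165)`. At a critical point, `∂f/∂x_j = 0` reads
`x_{σ⁻¹ j}^{a_{σ⁻¹ j}} = -a_j x_j^{a_j - 1} x_{σ j}`. Multiplying these five equations gives
`∏ xᵢ^{aᵢ} = ∏ (-aᵢ) · ∏ xᵢ^{aᵢ}`, and `∏ (-aᵢ) = -59400 ≠ 1`, so some coordinate vanishes.
Since every `aⱼ ≥ 2`, the same equation shows that `x_j = 0` forces `x_{σ⁻¹ j} = 0`, and going
around the cycle kills every coordinate.
-/

open MvPolynomial Equiv

variable {R ι : Type*} [CommRing R] [Fintype ι]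

noncomputable def loopPolynomial (σ : Perm ι) (a : ι → ℕ) : MvPolynomial ι R :=
  ∑ i, X i ^ a i * X (σ i)

theorem eval_pderiv_loopPolynomial [DecidableEq ι] (σ : Perm ι) (a : ι → ℕ) (x : ι → R)
    (j : ι) :
    eval x (pderiv j (loopPolynomial σ a)) =
      a j * x j ^ (a j - 1) * x (σ j) + x (σ⁻¹ j) ^ a (σ⁻¹ j) := by
  simp only [loopPolynomial, map_sum, Derivation.leibniz, Derivation.leibniz_pow, pderiv_X,
    Pi.single_apply]
  simp [Finset.sum_add_distrib, ← Perm.eq_inv_iff_eq, mul_comm, apply_ite (eval x), add_comm]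

theorem pow_eq_of_eval_pderiv_loopPolynomial_eq_zero [DecidableEq ι] {σ : Perm ι} {a : ι → ℕ}
    {x : ι → R} {j : ι} (h : eval x (pderiv j (loopPolynomial σ a)) = 0) :
    x (σ⁻¹ j) ^ a (σ⁻¹ j) = -a j * x j ^ (a j - 1) * x (σ j) := by
  rw [eval_pderiv_loopPolynomial] at h
  linear_combination h

variable [IsDomain R]

theorem exists_eq_zero_of_forall_eval_pderiv_loopPolynomial_eq_zero {σ : Perm ι} {a : ι → ℕ}
    (ha : ∀ i, a i ≠ 0) (hprod : ∏ i, (-(a i : R)) ≠ 1) {x : ι → R}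
    (hx : ∀ j, eval x (pderiv j (loopPolynomial σ a)) = 0) : ∃ i, x i = 0 := by
  classical
  set P := ∏ i, x i ^ a i
  have hP : P = (∏ i, (-(a i : R))) * P :=
    calc P = ∏ j, x (σ⁻¹ j) ^ a (σ⁻¹ j) := (Equiv.prod_comp σ⁻¹ fun i ↦ x i ^ a i).symm
      _ = ∏ j, (-(a j : R)) * (x j ^ (a j - 1) * x (σ j)) := by
        refine Finset.prod_congr rfl fun j _ ↦ ?_
        rw [pow_eq_of_eval_pderiv_loopPolynomial_eq_zero (hx j)]
        ring
      _ = (∏ j, (-(a j : R))) * ((∏ j, x j ^ (a j - 1)) * ∏ j, x j) := by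
        rw [Finset.prod_mul_distrib, Finset.prod_mul_distrib, Equiv.prod_comp σ x]
      _ = (∏ i, (-(a i : R))) * P := by
        rw [← Finset.prod_mul_distrib]
        simp only [pow_sub_one_mul (ha _), P]
  have hP0 : P = 0 := by
    have : (1 - ∏ i, (-(a i : R))) * P = 0 := by linear_combination hP
    exact (mul_eq_zero.mp this).resolve_left (sub_ne_zero.mpr hprod.symm)
  obtain ⟨i, -, hi⟩ := Finset.prod_eq_zero_iff.mp hP0
  exact ⟨i, eq_zero_of_pow_eq_zero hi⟩

theorem apply_inv_eq_zero_of_eval_pderiv_loopPolynomial_eq_zero [DecidableEq ι] {σ : Perm ι}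
    {a : ι → ℕ} {x : ι → R} {j : ι} (ha : 2 ≤ a j)
    (hx : eval x (pderiv j (loopPolynomial σ a)) = 0) (hj : x j = 0) : x (σ⁻¹ j) = 0 := by
  have := pow_eq_of_eval_pderiv_loopPolynomial_eq_zero hx
  rw [hj, zero_pow (by omega), mul_zero, zero_mul] at this
  exact eq_zero_of_pow_eq_zero this

theorem eq_zero_of_forall_eval_pderiv_loopPolynomial_eq_zero {σ : Perm ι}
    (hσ : ∀ i j, σ.SameCycle i j) {a : ι → ℕ} (ha : ∀ i, 2 ≤ a i) (hprod : ∏ i, (-(a i : R)) ≠ 1) {x : ι → R}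
    (hx : ∀ j, eval x (pderiv j (loopPolynomial σ a)) = 0) : x = 0 := by
  classical
  obtain ⟨i, hi⟩ := exists_eq_zero_of_forall_eval_pderiv_loopPolynomial_eq_zero
    (fun i ↦ Nat.ne_zero_of_lt (ha i)) hprod hx
  have hpow : ∀ n : ℕ, x ((σ⁻¹ ^ n) i) = 0 := by
    intro n
    induction n with
    | zero => exact hi
    | succ n ih =>
      rw [pow_succ', Perm.mul_apply]
      exact apply_inv_eq_zero_of_eval_pderiv_loopPolynomial_eq_zero (ha _) (hx _) ih
  funext k
  obtain ⟨n, rfl⟩ := (Perm.sameCycle_inv.mpr (hσ i k)).exists_nat_pow_eq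
  exact hpow n

/-- The only common zero of the partial derivatives of
`f = x₀²x₄ + x₁³x₃ + x₁x₂⁵ + x₀x₃¹² + x₂x₄¹⁶⁵` is the origin; hence the degree-191
hypersurface `{f = 0} ⊂ ℙ(95,61,26,8,1)` is quasismooth. -/
theorem dim3_example_quasismooth
    (f : MvPolynomial (Fin 5) ℂ)
    (hf : f = X 0 ^ 2 * X 4 + X 1 ^ 3 * X 3 + X 1 * X 2 ^ 5 + X 0 * X 3 ^ 12 +
      X 2 * X 4 ^ 165) :
    ∀ x : Fin 5 → ℂ, (∀ i, MvPolynomial.eval x (MvPolynomial.pderiv i f) = 0) →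
      x = 0 := by
  have hloop : f = loopPolynomial c[0, 4, 2, 1, 3] ![2, 3, 5, 12, 165] := by
    have hσ : ∀ i, c[(0 : Fin 5), 4, 2, 1, 3] i = ![4, 3, 1, 0, 2] i := by decide
    rw [hf, loopPolynomial, Fin.sum_univ_five]
    simp only [hσ, Matrix.cons_val]
    ring
  intro x hx
  rw [hloop] at hx
  refine eq_zero_of_forall_eval_pderiv_loopPolynomial_eq_zero (by decide) (by decide) ?_ hx
  simp only [Fin.prod_univ_five, Matrix.cons_val]
  norm_num
end

section
/- Let f = x_0^2 + x_1^3·x_5 + x_2^7·x_4 + x_2·x_3^{37} + x_1·x_4^{893} + x_3·x_5^{904149} ∈ ℂ[x_0, …, x_5]. If a point x ∈ ℂ^6 satisfies ∂f/∂x_i(x) = 0 for all i = 0, …, 5, then x = 0. (Hence the hypersurface {f = 0} of degree 925594 in ℙ(462797, 308531, 132129, 21445, 691, 1) is quasismooth.) -/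
/-!
At a common zero of the partials, each of `∂f/∂x₁, …, ∂f/∂x₅` expresses a pure power
(`x₄⁸⁹³, x₃³⁷, x₅⁹⁰⁴¹⁴⁹, x₂⁷, x₁³`) as a multiple of another monomial. Substituting these
into `M = x₁³x₂⁷x₃³⁶x₄x₅` returns `M = -777·893·904149·M`, so `M = 0` in characteristic zero.
A vanishing coordinate then forces the others to vanish through the same equations, and
`∂f/∂x₀ = 2x₀` gives `x₀ = 0`.
-/

open MvPolynomial

/-- The vanishing of `∂f/∂x₁, …, ∂f/∂x₅` at a point with coordinates `x₁, …, x₅ = a, …, e`. -/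
structure IsCritical {K : Type*} [CommRing K] (a b c d e : K) : Prop where
  deriv_one : 3 * a ^ 2 * e + d ^ 893 = 0
  deriv_two : 7 * b ^ 6 * d + c ^ 37 = 0
  deriv_three : 37 * b * c ^ 36 + e ^ 904149 = 0
  deriv_four : b ^ 7 + 893 * a * d ^ 892 = 0
  deriv_five : a ^ 3 + 904149 * c * e ^ 904148 = 0

namespace IsCritical

variable {K : Type*} [CommRing K] [NoZeroDivisors K] {a b c d e : K}

theorem monomial_eq_zero [CharZero K] (h : IsCritical a b c d e) :
    a ^ 3 * b ^ 7 * c ^ 36 * d * e = 0 := by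
  have hd : d ^ 893 = -(3 * a ^ 2 * e) := eq_neg_of_add_eq_zero_right h.deriv_one
  have hc : c ^ 37 = -(7 * b ^ 6 * d) := eq_neg_of_add_eq_zero_right h.deriv_two
  have he : e ^ 904149 = -(37 * b * c ^ 36) := eq_neg_of_add_eq_zero_right h.deriv_three
  have hb : b ^ 7 = -(893 * a * d ^ 892) := eq_neg_of_add_eq_zero_left h.deriv_four
  have ha : a ^ 3 = -(904149 * c * e ^ 904148) := eq_neg_of_add_eq_zero_left h.deriv_five
  have hM : a ^ 3 * b ^ 7 * c ^ 36 * d * e =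
      -(777 * 893 * 904149) * (a ^ 3 * b ^ 7 * c ^ 36 * d * e) :=
    calc a ^ 3 * b ^ 7 * c ^ 36 * d * e
        = 893 * 904149 * (a * c ^ 37 * d ^ 893 * e ^ 904149) := by rw [ha, hb]; ring
      _ = -(777 * 893 * 904149) * (a ^ 3 * b ^ 7 * c ^ 36 * d * e) := by rw [hc, hd, he]; ring
  have hM' : (1 + 777 * 893 * 904149 : K) * (a ^ 3 * b ^ 7 * c ^ 36 * d * e) = 0 := by
    linear_combination hM
  exact (mul_eq_zero.mp hM').resolve_left (by norm_num)

theorem a_eq_zero_of_monomial_eq_zero (h : IsCritical a b c d e)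
    (hM : a ^ 3 * b ^ 7 * c ^ 36 * d * e = 0) : a = 0 := by
  have a_of_e : e = 0 → a = 0 := fun he => by simpa [he] using h.deriv_five
  have a_of_c : c = 0 → a = 0 := fun hc => a_of_e (by simpa [hc] using h.deriv_three)
  have a_of_b : b = 0 → a = 0 := fun hb => a_of_c (by simpa [hb] using h.deriv_two)
  have a_of_d : d = 0 → a = 0 := fun hd => a_of_b (by simpa [hd] using h.deriv_four)
  simp only [mul_eq_zero, pow_eq_zero_iff, ne_eq, OfNat.ofNat_ne_zero,
    not_false_eq_true] at hM
  rcases hM with (((ha | hb) | hc) | hd) | he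
  exacts [ha, a_of_b hb, a_of_c hc, a_of_d hd, a_of_e he]

theorem eq_zero_of_a_eq_zero (h : IsCritical a b c d e) (ha : a = 0) :
    b = 0 ∧ c = 0 ∧ d = 0 ∧ e = 0 := by
  have hb : b = 0 := by simpa [ha] using h.deriv_four
  have hd : d = 0 := by simpa [ha] using h.deriv_one
  have hc : c = 0 := by simpa [hb] using h.deriv_two
  have he : e = 0 := by simpa [hb] using h.deriv_three
  exact ⟨hb, hc, hd, he⟩

theorem eq_zero [CharZero K] (h : IsCritical a b c d e) :
    a = 0 ∧ b = 0 ∧ c = 0 ∧ d = 0 ∧ e = 0 :=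
  have ha := h.a_eq_zero_of_monomial_eq_zero h.monomial_eq_zero
  ⟨ha, h.eq_zero_of_a_eq_zero ha⟩

end IsCritical

/-- The only common zero of the partial derivatives of
`f = x₀² + x₁³x₅ + x₂⁷x₄ + x₂x₃³⁷ + x₁x₄⁸⁹³ + x₃x₅⁹⁰⁴¹⁴⁹` is the origin; hence the
degree-925594 hypersurface `{f = 0} ⊂ ℙ(462797,308531,132129,21445,691,1)` is
quasismooth. -/
theorem dim4_example_quasismooth
    (f : MvPolynomial (Fin 6) ℂ)
    (hf : f = X 0 ^ 2 + X 1 ^ 3 * X 5 + X 2 ^ 7 * X 4 + X 2 * X 3 ^ 37 +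
      X 1 * X 4 ^ 893 + X 3 * X 5 ^ 904149) :
    ∀ x : Fin 6 → ℂ, (∀ i, MvPolynomial.eval x (MvPolynomial.pderiv i f) = 0) →
      x = 0 := by
  intro x hx
  have h0 := hx 0
  have h1 := hx 1
  have h2 := hx 2
  have h3 := hx 3
  have h4 := hx 4
  have h5 := hx 5
  simp only [hf, Fin.isValue, map_add, Derivation.leibniz_pow, Nat.add_one_sub_one, pow_one,
    pderiv_X, Pi.single_eq_same, smul_eq_mul, mul_one, nsmul_eq_mul, Nat.cast_ofNat,
    Derivation.leibniz, ne_eq, Fin.reduceEq, not_false_eq_true, Pi.single_eq_of_ne, mul_zero,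
    one_ne_zero, add_zero, map_mul, eval_ofNat, eval_X, mul_eq_zero,
    OfNat.ofNat_ne_zero, false_or, zero_ne_one, zero_add, map_pow] at h0 h1 h2 h3 h4 h5
  have hcrit : IsCritical (x 1) (x 2) (x 3) (x 4) (x 5) :=
    ⟨by linear_combination h1, by linear_combination h2, by linear_combination h3,
      by linear_combination h4, by linear_combination h5⟩
  obtain ⟨ha, hb, hc, hd, he⟩ := hcrit.eq_zero
  funext i
  fin_cases i <;> assumption
end
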